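/- arXiv:2009.04138 — 3 statements merged into one kernel-verified Lean document; each statement's English description precedes it below -/
import Mathlib

section
/- Let μ₀, μ₁ be absolutely continuous probability measures on ℝ with finite second moments. Then the L¹ (cost |x−y|) optimal transport cost equals ∫₀¹ |F₀^{[-1]}(s) − F₁^{[-1]}(s)| ds = ∫_ℝ |F₀(x) − F₁(x)| dx. -/
open MeasureTheory Set

/-- The quantile function `F^{[-1]}(s) = inf {t | F t ≥ s}` of a probability measure on ℝ. -/
noncomputable def quantile (μ : Measure ℝ) (s : ℝ) : ℝ :=
  sInf {t : ℝ | s ≤ (μ (Iic t)).toReal}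

/-- The optimal transport cost for the cost `|x - y|` as an infimum over couplings. -/
noncomputable def W1 (μ ν : Measure ℝ) : ENNReal :=
  sInf {c | ∃ γ : Measure (ℝ × ℝ), γ.map Prod.fst = μ ∧ γ.map Prod.snd = ν ∧
    c = ∫⁻ p, ENNReal.ofReal |p.1 - p.2| ∂γ}

open ProbabilityTheory
open scoped ENNReal symmDiff

/-! The cost of a coupling `γ` of `μ₀` and `μ₁` is, by Tonelli, `∫ γ {x ≤ t xor y ≤ t} dt`, since
`|x - y|` is the length of the interval between `x` and `y`. Each `γ {x ≤ t xor y ≤ t}` is at least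
`|F₀ t - F₁ t|`, with equality for the comonotone coupling, the image of the uniform measure on
`(0, 1)` under `s ↦ (F₀^{[-1]} s, F₁^{[-1]} s)`, because `F^{[-1]} s ≤ t ↔ s ≤ F t`. So this
coupling is optimal, its cost is `∫ |F₀ - F₁|`, and by construction it is also
`∫₀¹ |F₀^{[-1]} - F₁^{[-1]}|`. Finite second moments make the cost finite, so that the Bochner
integrals in the statement are not junk. -/

lemma Set.Ici_symmDiff_Ici (a b : ℝ) : Ici a ∆ Ici b = Ico (min a b) (max a b) := by
  ext x; simp only [mem_symmDiff, mem_Ici, mem_Ico, min_le_iff]; grind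

lemma Set.Iic_symmDiff_Iic (a b : ℝ) : Iic a ∆ Iic b = Ioc (min a b) (max a b) := by
  ext x; simp only [mem_symmDiff, mem_Iic, mem_Ioc, le_max_iff, min_lt_iff]; grind

lemma Real.volume_Ici_symmDiff_Ici (a b : ℝ) : volume (Ici a ∆ Ici b) = ENNReal.ofReal |a - b| := by
  rw [Ici_symmDiff_Ici, Real.volume_Ico, max_sub_min_eq_abs, abs_sub_comm]

lemma Real.volume_Iic_symmDiff_Iic (a b : ℝ) : volume (Iic a ∆ Iic b) = ENNReal.ofReal |a - b| := by
  rw [Iic_symmDiff_Iic, Real.volume_Ioc, max_sub_min_eq_abs, abs_sub_comm]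

lemma lintegral_ofReal_abs_sub (γ : Measure (ℝ × ℝ)) [SFinite γ] :
    ∫⁻ p, ENNReal.ofReal |p.1 - p.2| ∂γ =
      ∫⁻ t, γ ((Prod.fst ⁻¹' Iic t) ∆ (Prod.snd ⁻¹' Iic t)) := by
  have hS : MeasurableSet ({q : (ℝ × ℝ) × ℝ | q.1.1 ≤ q.2} ∆ {q | q.1.2 ≤ q.2}) :=
    (measurableSet_le (by fun_prop) (by fun_prop)).symmDiff
      (measurableSet_le (by fun_prop) (by fun_prop))
  -- both sides slice the `γ.prod volume`-measure of `{(p, t) | p.1 ≤ t xor p.2 ≤ t}`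
  simp_rw [← Real.volume_Ici_symmDiff_Ici]
  exact (Measure.prod_apply hS).symm.trans (Measure.prod_apply_symm hS)

lemma Measure.restrict_Ioo_apply_of_subset_Icc {α : Type*} [MeasurableSpace α] [PartialOrder α]
    {μ : Measure α} [NullSingletonClass μ] {a b : α} {s : Set α} (hs : s ⊆ Icc a b) :
    μ.restrict (Ioo a b) s = μ s := by
  rw [Measure.restrict_congr_set Ioo_ae_eq_Icc, Measure.restrict_eq_self _ hs]

lemma volume_restrict_Ioo_zero_one_Iic {c : ℝ} (hc : c ≤ 1) :
    volume.restrict (Ioo 0 1) (Iic c) = ENNReal.ofReal c := by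
  have : Iic c =ᵐ[volume.restrict (Ioo (0 : ℝ) 1)] Icc 0 c :=
    ae_restrict_of_forall_mem measurableSet_Ioo fun s hs =>
      propext ⟨fun h => ⟨hs.1.le, h⟩, And.right⟩
  rw [measure_congr this, Measure.restrict_Ioo_apply_of_subset_Icc (Icc_subset_Icc le_rfl hc),
    Real.volume_Icc, sub_zero]

instance : IsProbabilityMeasure (volume.restrict (Ioo (0 : ℝ) 1)) :=
  ⟨by simp [Real.volume_Ioo]⟩

section Quantile

variable (μ : Measure ℝ) [IsProbabilityMeasure μ]

lemma quantile_le_iff {s : ℝ} (hs : s ∈ Ioo (0 : ℝ) 1) (t : ℝ) :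
    quantile μ s ≤ t ↔ s ≤ cdf μ t := by
  have hq : quantile μ s = sInf {t : ℝ | s ≤ cdf μ t} := by
    simp only [quantile, cdf_eq_real, measureReal_def]
  obtain ⟨u₀, hu₀⟩ : ∃ u, cdf μ u < s := (tendsto_cdf_atBot μ |>.eventually_lt_const hs.1).exists
  obtain ⟨u₁, hu₁⟩ : ∃ u, s ≤ cdf μ u := (tendsto_cdf_atTop μ |>.eventually_const_le hs.2).exists
  have hbdd : BddBelow {t : ℝ | s ≤ cdf μ t} :=
    ⟨u₀, fun _ hu => ((monotone_cdf μ).reflect_lt (hu₀.trans_le hu)).le⟩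
  rw [hq]
  refine ⟨fun h => ?_, fun h => csInf_le hbdd h⟩
  have hright : ∀ u, t < u → s ≤ cdf μ u := fun u hu => by
    obtain ⟨v, hv, hvu⟩ := exists_lt_of_csInf_lt ⟨u₁, hu₁⟩ (h.trans_lt hu)
    exact hv.trans (monotone_cdf μ hvu.le)
  exact ge_of_tendsto ((cdf μ).right_continuous t |>.mono Ioi_subset_Ici_self).tendsto
    (eventually_nhdsWithin_of_forall hright)

lemma monotoneOn_quantile : MonotoneOn (quantile μ) (Ioo 0 1) := fun _ ha _ hb hab =>
  (quantile_le_iff μ ha _).2 <| hab.trans <| (quantile_le_iff μ hb _).1 le_rfl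

lemma aemeasurable_quantile : AEMeasurable (quantile μ) (volume.restrict (Ioo 0 1)) :=
  aemeasurable_restrict_of_monotoneOn measurableSet_Ioo (monotoneOn_quantile μ)

lemma quantile_preimage_Iic_ae_eq (t : ℝ) :
    quantile μ ⁻¹' Iic t =ᵐ[volume.restrict (Ioo 0 1)] Iic (cdf μ t) :=
  ae_restrict_of_forall_mem measurableSet_Ioo fun _ hs => propext (quantile_le_iff μ hs t)

lemma map_quantile : (volume.restrict (Ioo 0 1)).map (quantile μ) = μ := by
  have := Measure.isProbabilityMeasure_map (aemeasurable_quantile μ)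
  refine Measure.ext_of_Iic _ _ fun t => ?_
  rw [Measure.map_apply_of_aemeasurable (aemeasurable_quantile μ) measurableSet_Iic,
    measure_congr (quantile_preimage_Iic_ae_eq μ t),
    volume_restrict_Ioo_zero_one_Iic (cdf_le_one μ t), ofReal_cdf]

end Quantile

noncomputable def quantileCoupling (μ ν : Measure ℝ) : Measure (ℝ × ℝ) :=
  (volume.restrict (Ioo 0 1)).map fun s => (quantile μ s, quantile ν s)

section QuantileCoupling

variable (μ ν : Measure ℝ) [IsProbabilityMeasure μ] [IsProbabilityMeasure ν]

lemma aemeasurable_quantile_prod :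
    AEMeasurable (fun s => (quantile μ s, quantile ν s)) (volume.restrict (Ioo 0 1)) :=
  (aemeasurable_quantile μ).prodMk (aemeasurable_quantile ν)

instance : IsProbabilityMeasure (quantileCoupling μ ν) :=
  Measure.isProbabilityMeasure_map (aemeasurable_quantile_prod μ ν)

lemma quantileCoupling_map_fst : (quantileCoupling μ ν).map Prod.fst = μ := by
  rw [quantileCoupling, AEMeasurable.map_map_of_aemeasurable measurable_fst.aemeasurable
    (aemeasurable_quantile_prod μ ν)]
  exact map_quantile μ

lemma quantileCoupling_map_snd : (quantileCoupling μ ν).map Prod.snd = ν := by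
  rw [quantileCoupling, AEMeasurable.map_map_of_aemeasurable measurable_snd.aemeasurable
    (aemeasurable_quantile_prod μ ν)]
  exact map_quantile ν

lemma lintegral_quantileCoupling (f : ℝ × ℝ → ℝ≥0∞) (hf : Measurable f) :
    ∫⁻ p, f p ∂quantileCoupling μ ν = ∫⁻ s in Ioo 0 1, f (quantile μ s, quantile ν s) :=
  lintegral_map' hf.aemeasurable (aemeasurable_quantile_prod μ ν)

lemma quantileCoupling_symmDiff (t : ℝ) :
    quantileCoupling μ ν ((Prod.fst ⁻¹' Iic t) ∆ (Prod.snd ⁻¹' Iic t)) =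
      ENNReal.ofReal |cdf μ t - cdf ν t| := by
  have hsub : Iic (cdf μ t) ∆ Iic (cdf ν t) ⊆ Icc 0 1 := by
    rw [Iic_symmDiff_Iic]
    exact Ioc_subset_Icc_self.trans (Icc_subset_Icc (le_min (cdf_nonneg μ t) (cdf_nonneg ν t))
      (max_le (cdf_le_one μ t) (cdf_le_one ν t)))
  rw [quantileCoupling, Measure.map_apply_of_aemeasurable (aemeasurable_quantile_prod μ ν)
      ((measurable_fst measurableSet_Iic).symmDiff (measurable_snd measurableSet_Iic)),
    preimage_symmDiff]
  change volume.restrict _ ((quantile μ ⁻¹' Iic t) ∆ (quantile ν ⁻¹' Iic t)) = _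
  rw [measure_congr ((quantile_preimage_Iic_ae_eq μ t).symmDiff (quantile_preimage_Iic_ae_eq ν t)),
    Measure.restrict_Ioo_apply_of_subset_Icc hsub, Real.volume_Iic_symmDiff_Iic]

lemma lintegral_quantileCoupling_abs_sub :
    ∫⁻ p, ENNReal.ofReal |p.1 - p.2| ∂quantileCoupling μ ν =
      ∫⁻ t, ENNReal.ofReal |cdf μ t - cdf ν t| := by
  simp_rw [lintegral_ofReal_abs_sub, quantileCoupling_symmDiff]

end QuantileCoupling

lemma lintegral_abs_cdf_sub_le_of_coupling {μ ν : Measure ℝ} [IsProbabilityMeasure μ]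
    [IsProbabilityMeasure ν] (γ : Measure (ℝ × ℝ)) (hμ : γ.map Prod.fst = μ)
    (hν : γ.map Prod.snd = ν) :
    ∫⁻ t, ENNReal.ofReal |cdf μ t - cdf ν t| ≤ ∫⁻ p, ENNReal.ofReal |p.1 - p.2| ∂γ := by
  subst hμ hν
  have := Measure.isProbabilityMeasure_of_map (μ := γ) Prod.fst
  rw [lintegral_ofReal_abs_sub]
  refine lintegral_mono fun t => ENNReal.ofReal_le_of_le_toReal ?_
  rw [cdf_eq_real, cdf_eq_real, map_measureReal_apply measurable_fst measurableSet_Iic,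
    map_measureReal_apply measurable_snd measurableSet_Iic]
  exact abs_measureReal_sub_le_measureReal_symmDiff
    (measurable_fst measurableSet_Iic).nullMeasurableSet
    (measurable_snd measurableSet_Iic).nullMeasurableSet

lemma lintegral_ofReal_abs_sub_le (γ : Measure (ℝ × ℝ)) :
    ∫⁻ p, ENNReal.ofReal |p.1 - p.2| ∂γ ≤
      ∫⁻ x, ENNReal.ofReal |x| ∂(γ.map Prod.fst) + ∫⁻ x, ENNReal.ofReal |x| ∂(γ.map Prod.snd) := by
  rw [lintegral_map (by fun_prop) measurable_fst, lintegral_map (by fun_prop) measurable_snd,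
    ← lintegral_add_left (by fun_prop)]
  exact lintegral_mono fun p => (ENNReal.ofReal_le_ofReal (abs_sub _ _)).trans
    (ENNReal.ofReal_add (abs_nonneg _) (abs_nonneg _)).le

lemma lintegral_ofReal_abs_lt_top {μ : Measure ℝ} [IsFiniteMeasure μ]
    (h : ∫⁻ x, ENNReal.ofReal (x ^ 2) ∂μ < ⊤) : ∫⁻ x, ENNReal.ofReal |x| ∂μ < ⊤ := by
  have hpt (x : ℝ) : ENNReal.ofReal |x| ≤ 1 + ENNReal.ofReal (x ^ 2) := by
    rw [← ENNReal.ofReal_one, ← ENNReal.ofReal_add zero_le_one (sq_nonneg x)]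
    exact ENNReal.ofReal_le_ofReal (by nlinarith [sq_nonneg (|x| - 1), sq_abs x])
  calc ∫⁻ x, ENNReal.ofReal |x| ∂μ
      ≤ ∫⁻ x, (1 + ENNReal.ofReal (x ^ 2)) ∂μ := lintegral_mono hpt
    _ = μ univ + ∫⁻ x, ENNReal.ofReal (x ^ 2) ∂μ := by
      rw [lintegral_add_left measurable_const, lintegral_const, one_mul]
    _ < ⊤ := ENNReal.add_lt_top.2 ⟨measure_lt_top μ univ, h⟩

theorem W1_eq_quantile_integral_eq_cdf_integral_general (μ₀ μ₁ : Measure ℝ)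
    [IsProbabilityMeasure μ₀] [IsProbabilityMeasure μ₁]
    (h₀ : ∫⁻ x, ENNReal.ofReal (x ^ 2) ∂μ₀ < ⊤)
    (h₁ : ∫⁻ x, ENNReal.ofReal (x ^ 2) ∂μ₁ < ⊤) :
    W1 μ₀ μ₁ = ENNReal.ofReal (∫ s in Ioo (0 : ℝ) 1, |quantile μ₀ s - quantile μ₁ s|) ∧
    ∫ s in Ioo (0 : ℝ) 1, |quantile μ₀ s - quantile μ₁ s| =
      ∫ x : ℝ, |(μ₀ (Iic x)).toReal - (μ₁ (Iic x)).toReal| := by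
  set L := ∫⁻ t, ENNReal.ofReal |cdf μ₀ t - cdf μ₁ t|
  have hcost : ∫⁻ p, ENNReal.ofReal |p.1 - p.2| ∂quantileCoupling μ₀ μ₁ = L :=
    lintegral_quantileCoupling_abs_sub μ₀ μ₁
  have hW : W1 μ₀ μ₁ = L := by
    refine le_antisymm (sInf_le ⟨_, quantileCoupling_map_fst μ₀ μ₁,
      quantileCoupling_map_snd μ₀ μ₁, hcost.symm⟩) (le_sInf ?_)
    rintro _ ⟨γ, hγ₀, hγ₁, rfl⟩
    exact lintegral_abs_cdf_sub_le_of_coupling γ hγ₀ hγ₁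
  have hL : L ≠ ⊤ := by
    refine ne_top_of_le_ne_top ?_ (hcost ▸ lintegral_ofReal_abs_sub_le _)
    rw [quantileCoupling_map_fst, quantileCoupling_map_snd]
    exact (ENNReal.add_lt_top.2
      ⟨lintegral_ofReal_abs_lt_top h₀, lintegral_ofReal_abs_lt_top h₁⟩).ne
  have hQ : ∫ s in Ioo (0 : ℝ) 1, |quantile μ₀ s - quantile μ₁ s| = L.toReal := by
    rw [integral_eq_lintegral_of_nonneg_ae (f := fun s => |quantile μ₀ s - quantile μ₁ s|)
      (ae_of_all _ fun _ => abs_nonneg _)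
      ((aemeasurable_quantile μ₀).sub (aemeasurable_quantile μ₁)).abs.aestronglyMeasurable,
      ← hcost, lintegral_quantileCoupling _ _ _ (by fun_prop)]
  have hF : ∫ x : ℝ, |(μ₀ (Iic x)).toReal - (μ₁ (Iic x)).toReal| = L.toReal := by
    simp_rw [← measureReal_def, ← cdf_eq_real]
    exact integral_eq_lintegral_of_nonneg_ae (ae_of_all _ fun _ => abs_nonneg _)
      ((monotone_cdf μ₀).measurable.sub (monotone_cdf μ₁).measurable).abs.aestronglyMeasurable
  exact ⟨by rw [hW, hQ, ENNReal.ofReal_toReal hL], hQ.trans hF.symm⟩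

/-- For absolutely continuous probability measures on ℝ with finite second moments,
the `L¹` optimal transport cost equals
`∫₀¹ |F₀^{[-1]}(s) − F₁^{[-1]}(s)| ds = ∫_ℝ |F₀(x) − F₁(x)| dx`. -/
theorem W1_eq_quantile_integral_eq_cdf_integral (μ₀ μ₁ : Measure ℝ)
    [IsProbabilityMeasure μ₀] [IsProbabilityMeasure μ₁]
    (hac₀ : μ₀ ≪ volume) (hac₁ : μ₁ ≪ volume)
    (h₀ : ∫⁻ x, ENNReal.ofReal (x ^ 2) ∂μ₀ < ⊤)
    (h₁ : ∫⁻ x, ENNReal.ofReal (x ^ 2) ∂μ₁ < ⊤) :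
    W1 μ₀ μ₁ = ENNReal.ofReal (∫ s in Ioo (0 : ℝ) 1, |quantile μ₀ s - quantile μ₁ s|) ∧
    ∫ s in Ioo (0 : ℝ) 1, |quantile μ₀ s - quantile μ₁ s| =
      ∫ x : ℝ, |(μ₀ (Iic x)).toReal - (μ₁ (Iic x)).toReal| :=
  W1_eq_quantile_integral_eq_cdf_integral_general μ₀ μ₁ h₀ h₁
end

section
/- Let μ₀ be a probability measure on the circle S¹ (parametrized by θ ∈ [0, 2π)) with density p₀, and let μ₁ have density p₁ = p₀ + a·cos(kθ) for a fixed integer k ≥ 1 and a ∈ ℝ, where additionally p₀ − (a cos)⁻(kθ) ≥ 0 pointwise. Then W₂²(μ₀, μ₁) ≤ (2π²/k²)·|a|, where W₂ is the quadratic Wasserstein distance on S¹ with cost c(θ,φ) = min(|θ−φ|, 2π−|θ−φ|)². -/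
open MeasureTheory Set Real

/-- The squared geodesic cost on the circle parametrized by `[0, 2π)`. -/
noncomputable def circleCost (θ φ : ℝ) : ℝ :=
  (min |θ - φ| (2 * π - |θ - φ|)) ^ 2

/-- The quadratic Wasserstein cost on the circle (as infimum over couplings of measures on
the parametrizing interval). -/
noncomputable def W2sqCircle (μ ν : Measure ℝ) : ENNReal :=
  sInf {c | ∃ γ : Measure (ℝ × ℝ), γ.map Prod.fst = μ ∧ γ.map Prod.snd = ν ∧
    c = ∫⁻ p, ENNReal.ofReal (circleCost p.1 p.2) ∂γ}

open scoped ENNReal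

/-!
Write `p₀ = ν + (a cos k·)⁻` and `p₀ + a cos k· = ν + (a cos k·)⁺`, where `ν ≥ 0` by hypothesis.
The common part `ν` is coupled to itself at no cost. The rotation by `π / k` carries
`(a cos k·)⁻` onto `(a cos k·)⁺` and moves each point a geodesic distance `π / k`, and the
moved mass is `∫₀^{2π} (a cos kθ)⁻ dθ = 2|a|`. Since the transport cost is subadditive under
sums of measures, `W₂² ≤ 0 + (π / k)² · 2|a|`.
-/

lemma continuous_circleCost : Continuous fun p : ℝ × ℝ => circleCost p.1 p.2 := by
  unfold circleCost
  fun_prop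

lemma circleCost_self (θ : ℝ) : circleCost θ θ = 0 := by
  simp [circleCost, pi_pos.le]

lemma circleCost_le_sq {θ φ c : ℝ} (hθφ : |θ - φ| ≤ 2 * π)
    (h : |θ - φ| ≤ c ∨ 2 * π - |θ - φ| ≤ c) : circleCost θ φ ≤ c ^ 2 := by
  refine pow_le_pow_left₀ (le_min (abs_nonneg _) (sub_nonneg.2 hθφ)) ?_ 2
  rcases h with h | h
  · exact (min_le_left _ _).trans h
  · exact (min_le_right _ _).trans h

lemma circleCost_add_right (θ d : ℝ) : circleCost θ (θ + d) = circleCost 0 d := by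
  simp [circleCost]

lemma W2sqCircle_le_lintegral {μ ν : Measure ℝ} (γ : Measure (ℝ × ℝ))
    (hfst : γ.map Prod.fst = μ) (hsnd : γ.map Prod.snd = ν) :
    W2sqCircle μ ν ≤ ∫⁻ p, ENNReal.ofReal (circleCost p.1 p.2) ∂γ :=
  sInf_le ⟨γ, hfst, hsnd, rfl⟩

lemma W2sqCircle_add_le (μ₁ μ₂ ν₁ ν₂ : Measure ℝ) :
    W2sqCircle (μ₁ + μ₂) (ν₁ + ν₂) ≤ W2sqCircle μ₁ ν₁ + W2sqCircle μ₂ ν₂ := by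
  unfold W2sqCircle
  rw [ENNReal.sInf_add]
  refine le_iInf₂ fun _ ⟨γ₁, hfst₁, hsnd₁, hc₁⟩ => ?_
  rw [ENNReal.add_sInf]
  refine le_iInf₂ fun _ ⟨γ₂, hfst₂, hsnd₂, hc₂⟩ => ?_
  rw [hc₁, hc₂, ← lintegral_add_measure]
  exact W2sqCircle_le_lintegral _
    (by rw [Measure.map_add _ _ measurable_fst, hfst₁, hfst₂])
    (by rw [Measure.map_add _ _ measurable_snd, hsnd₁, hsnd₂])

lemma W2sqCircle_map_le (ρ : Measure ℝ) {T : ℝ → ℝ} (hT : Measurable T) :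
    W2sqCircle ρ (ρ.map T) ≤ ∫⁻ θ, ENNReal.ofReal (circleCost θ (T θ)) ∂ρ := by
  have hgraph : Measurable fun θ => (θ, T θ) := measurable_id.prodMk hT
  calc W2sqCircle ρ (ρ.map T)
      ≤ ∫⁻ p, ENNReal.ofReal (circleCost p.1 p.2) ∂ρ.map (fun θ => (θ, T θ)) :=
        W2sqCircle_le_lintegral _
          (by rw [Measure.map_map measurable_fst hgraph]; exact Measure.map_id)
          (Measure.map_map measurable_snd hgraph)
    _ = ∫⁻ θ, ENNReal.ofReal (circleCost θ (T θ)) ∂ρ :=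
        lintegral_map (ENNReal.measurable_ofReal.comp continuous_circleCost.measurable) hgraph

lemma W2sqCircle_self (μ : Measure ℝ) : W2sqCircle μ μ = 0 := by
  refine nonpos_iff_eq_zero.1 ?_
  simpa [circleCost_self] using W2sqCircle_map_le μ measurable_id

lemma W2sqCircle_map_add_const_le (ρ : Measure ℝ) (d : ℝ) :
    W2sqCircle ρ (ρ.map (· + d)) ≤ ENNReal.ofReal (circleCost 0 d) * ρ univ := by
  simpa [circleCost_add_right] using W2sqCircle_map_le ρ (measurable_add_const d)

lemma MeasurableEquiv.map_withDensity {α β : Type*} [MeasurableSpace α] [MeasurableSpace β]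
    (e : α ≃ᵐ β) (μ : Measure α) (f : α → ℝ≥0∞) :
    (μ.withDensity f).map e = (μ.map e).withDensity (f ∘ e.symm) := by
  ext s hs
  rw [Measure.map_apply e.measurable hs, withDensity_apply _ (hs.preimage e.measurable),
    withDensity_apply _ hs, e.restrict_map, lintegral_map_equiv]
  simp

lemma map_add_right_withDensity_restrict {G : Type*} [MeasurableSpace G] [AddGroup G]
    [MeasurableAdd G] (μ : Measure G) [μ.IsAddRightInvariant] (c : G) (t : Set G)
    (f : G → ℝ≥0∞) :
    ((μ.restrict ((· + c) ⁻¹' t)).withDensity f).map (· + c) =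
      (μ.restrict t).withDensity (fun x => f (x - c)) := by
  have := (MeasurableEquiv.addRight c).map_withDensity (μ.restrict ((· + c) ⁻¹' t)) f
  rw [MeasurableEquiv.coe_addRight] at this
  rw [this, ← MeasurableEquiv.coe_addRight, ← MeasurableEquiv.restrict_map,
    MeasurableEquiv.coe_addRight, map_add_right_eq_self]
  simp [Function.comp_def, sub_eq_add_neg]

theorem Function.Periodic.withDensity_restrict_Ico_comp_sub {g : ℝ → ℝ≥0∞} {T c : ℝ}
    (hg : Function.Periodic g T) (hc₀ : 0 ≤ c) (hcT : c ≤ T) :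
    (volume.restrict (Ico 0 T)).withDensity (fun x => g (x - c)) =
      ((volume.restrict (Ico 0 (T - c))).withDensity g).map (· + c) +
        ((volume.restrict (Ico (T - c) T)).withDensity g).map (· + (c - T)) := by
  have hA : Ico 0 (T - c) = (· + c) ⁻¹' Ico c T := by simp
  have hB : Ico (T - c) T = (· + (c - T)) ⁻¹' Ico 0 c := by simp
  rw [hA, hB, map_add_right_withDensity_restrict, map_add_right_withDensity_restrict,
    ← Ico_union_Ico_eq_Ico hc₀ hcT, Measure.restrict_union Ico_disjoint_Ico_same measurableSet_Ico,
    withDensity_add_measure, add_comm]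
  congr 2
  funext x
  rw [sub_sub_eq_add_sub, add_sub_right_comm, hg]

lemma withDensity_ofReal_eq_add {α : Type*} [MeasurableSpace α] (μ : Measure α) {p f g : α → ℝ}
    (hf : ∀ x, 0 ≤ f x) (hg : ∀ x, 0 ≤ g x) (hg_meas : Measurable g) (hp : ∀ x, p x = f x + g x) :
    μ.withDensity (fun x => ENNReal.ofReal (p x)) =
      μ.withDensity (fun x => ENNReal.ofReal (f x)) +
        μ.withDensity (fun x => ENNReal.ofReal (g x)) := by
  rw [← withDensity_add_right _ hg_meas.ennreal_ofReal]
  congr 1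
  funext x
  rw [hp, Pi.add_apply, ENNReal.ofReal_add (hf x) (hg x)]

lemma W2sqCircle_withDensity_comp_sub_le {g : ℝ → ℝ≥0∞} {c : ℝ}
    (hg : Function.Periodic g (2 * π)) (hc₀ : 0 ≤ c) (hcπ : c ≤ π) :
    W2sqCircle ((volume.restrict (Ico 0 (2 * π))).withDensity g)
        ((volume.restrict (Ico 0 (2 * π))).withDensity fun x => g (x - c)) ≤
      ENNReal.ofReal (c ^ 2) * (volume.restrict (Ico 0 (2 * π))).withDensity g univ := by
  have hc2π : c ≤ 2 * π := by linarith [pi_pos]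
  set ρA := (volume.restrict (Ico 0 (2 * π - c))).withDensity g
  set ρB := (volume.restrict (Ico (2 * π - c) (2 * π))).withDensity g
  have hsplit : (volume.restrict (Ico 0 (2 * π))).withDensity g = ρA + ρB := by
    rw [← Ico_union_Ico_eq_Ico (b := 2 * π - c) (by linarith) (by linarith),
      Measure.restrict_union Ico_disjoint_Ico_same measurableSet_Ico, withDensity_add_measure]
  have hdA : |0 - c| = c := by rw [zero_sub, abs_neg, abs_of_nonneg hc₀]
  have hdB : |0 - (c - 2 * π)| = 2 * π - c := by rw [zero_sub, neg_sub, abs_of_nonneg (by linarith)]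
  have hcostA : circleCost 0 c ≤ c ^ 2 := circleCost_le_sq (hdA.symm ▸ hc2π) (Or.inl hdA.le)
  have hcostB : circleCost 0 (c - 2 * π) ≤ c ^ 2 :=
    circleCost_le_sq (by rw [hdB]; linarith) (Or.inr (by rw [hdB]; linarith))
  rw [hg.withDensity_restrict_Ico_comp_sub hc₀ hc2π, hsplit, Measure.add_apply, mul_add]
  calc W2sqCircle (ρA + ρB) (ρA.map (· + c) + ρB.map (· + (c - 2 * π)))
      ≤ W2sqCircle ρA (ρA.map (· + c)) + W2sqCircle ρB (ρB.map (· + (c - 2 * π))) :=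
        W2sqCircle_add_le _ _ _ _
    _ ≤ ENNReal.ofReal (c ^ 2) * ρA univ + ENNReal.ofReal (c ^ 2) * ρB univ := by
        gcongr
        · exact (W2sqCircle_map_add_const_le ρA c).trans (by gcongr)
        · exact (W2sqCircle_map_add_const_le ρB _).trans (by gcongr)

theorem Function.Periodic.intervalIntegral_comp_natCast_mul {E : Type*} [NormedAddCommGroup E]
    [NormedSpace ℝ E] {f : ℝ → E} {T : ℝ} (hf : Function.Periodic f T)
    (hfi : ∀ t₁ t₂, IntervalIntegrable f volume t₁ t₂) {k : ℕ} (hk : k ≠ 0) :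
    ∫ x in 0..T, f (k * x) = ∫ x in 0..T, f x := by
  have hk' : (k : ℝ) ≠ 0 := Nat.cast_ne_zero.2 hk
  rw [intervalIntegral.integral_comp_mul_left f hk', mul_zero,
    show (k : ℝ) * T = 0 + (k : ℤ) • T by simp,
    hf.intervalIntegral_add_zsmul_eq k 0 hfi, zero_add, natCast_zsmul,
    ← Nat.cast_smul_eq_nsmul ℝ, smul_smul, inv_mul_cancel₀ hk', one_smul]

lemma integral_abs_cos_zero_two_pi : ∫ x in 0..2 * π, |cos x| = 4 := by
  have hper : Function.Periodic (fun x => |cos x|) π := fun x => by simp [cos_add_pi]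
  have hint : ∀ t₁ t₂, IntervalIntegrable (fun x => |cos x|) volume t₁ t₂ := fun _ _ =>
    (continuous_abs.comp continuous_cos).intervalIntegrable _ _
  have hhalf : ∫ x in -(π / 2)..π / 2, |cos x| = ∫ x in -(π / 2)..π / 2, cos x :=
    intervalIntegral.integral_congr fun x hx => abs_of_nonneg <|
      cos_nonneg_of_mem_Icc (by rwa [uIcc_of_le (by linarith [pi_pos])] at hx)
  calc ∫ x in 0..2 * π, |cos x|
      = (2 : ℤ) • ∫ x in 0..0 + π, |cos x| := by
        rw [← hper.intervalIntegral_add_zsmul_eq 2 0 hint]; norm_num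
    _ = (2 : ℤ) • ∫ x in -(π / 2)..-(π / 2) + π, |cos x| := by
        rw [hper.intervalIntegral_add_eq 0 (-(π / 2))]
    _ = 4 := by
        rw [show -(π / 2) + π = π / 2 by ring, hhalf, integral_cos]
        norm_num

lemma integral_negPart_mul_cos (a : ℝ) : ∫ x in 0..2 * π, (a * cos x)⁻ = 2 * |a| := by
  have hneg : ∀ x, (a * cos x)⁻ = (|a| * |cos x| - a * cos x) / 2 := fun x => by
    rw [← abs_mul]
    linarith [posPart_add_negPart (a * cos x), posPart_sub_negPart (a * cos x)]
  simp_rw [hneg]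
  rw [intervalIntegral.integral_div, intervalIntegral.integral_sub
      ((by fun_prop : Continuous fun x => |a| * |cos x|).intervalIntegrable _ _)
      ((by fun_prop : Continuous fun x => a * cos x).intervalIntegrable _ _),
    intervalIntegral.integral_const_mul, intervalIntegral.integral_const_mul,
    integral_abs_cos_zero_two_pi, integral_cos, sin_two_pi, sin_zero]
  ring

lemma setLIntegral_negPart_mul_cos_natCast_mul (a : ℝ) {k : ℕ} (hk : k ≠ 0) :
    ∫⁻ θ in Ico 0 (2 * π), ENNReal.ofReal (a * cos (k * θ))⁻ = ENNReal.ofReal (2 * |a|) := by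
  have hper : Function.Periodic (fun x => (a * cos x)⁻) (2 * π) := fun x => by simp
  have hcont : Continuous fun x => (a * cos x)⁻ := by fun_prop
  have hcont_k : Continuous fun x => (a * cos (k * x))⁻ := by fun_prop
  rw [← ofReal_integral_eq_lintegral_ofReal
      (hcont_k.integrableOn_Icc.mono_set Ico_subset_Icc_self)
      (Filter.Eventually.of_forall fun _ => negPart_nonneg _),
    integral_Ico_eq_integral_Ioc, ← intervalIntegral.integral_of_le two_pi_pos.le,
    hper.intervalIntegral_comp_natCast_mul (fun _ _ => hcont.intervalIntegrable _ _) hk,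
    integral_negPart_mul_cos]

lemma negPart_mul_cos_natCast_mul_sub_pi_div (a θ : ℝ) {k : ℕ} (hk : k ≠ 0) :
    (a * cos (k * (θ - π / k)))⁻ = (a * cos (k * θ))⁺ := by
  rw [mul_sub, mul_div_cancel₀ π (Nat.cast_ne_zero.2 hk), cos_sub_pi, mul_neg, negPart_neg]

theorem W2sq_circle_single_frequency_general (p₀ : ℝ → ℝ) (a : ℝ) (k : ℕ) (hk : 1 ≤ k)
    (μ₀ μ₁ : Measure ℝ)
    (hμ₀ : μ₀ = (volume.restrict (Ico 0 (2 * π))).withDensity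
      (fun θ => ENNReal.ofReal (p₀ θ)))
    (hμ₁ : μ₁ = (volume.restrict (Ico 0 (2 * π))).withDensity
      (fun θ => ENNReal.ofReal (p₀ θ + a * Real.cos (k * θ))))
    (hν : ∀ θ, 0 ≤ p₀ θ - max (-(a * Real.cos (k * θ))) 0) :
    W2sqCircle μ₀ μ₁ ≤ ENNReal.ofReal (2 * π ^ 2 / (k : ℝ) ^ 2 * |a|) := by
  set c := π / k
  set m : ℝ → ℝ := fun θ => (a * cos (k * θ))⁻
  have hm_cont : Continuous m := by fun_prop
  have hm_per : Function.Periodic (fun θ => ENNReal.ofReal (m θ)) (2 * π) := fun θ => by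
    simp only [m, mul_add, cos_add_nat_mul_two_pi]
  have hm_shift : ∀ θ, m (θ - c) = (a * cos (k * θ))⁺ := fun θ =>
    negPart_mul_cos_natCast_mul_sub_pi_div a θ (by omega)
  set ν := (volume.restrict (Ico 0 (2 * π))).withDensity fun θ => ENNReal.ofReal (p₀ θ - m θ)
  set ρ := (volume.restrict (Ico 0 (2 * π))).withDensity fun θ => ENNReal.ofReal (m θ)
  have hμ₀' : μ₀ = ν + ρ := hμ₀.trans <|
    withDensity_ofReal_eq_add _ hν (fun _ => negPart_nonneg _) hm_cont.measurable fun θ => by ring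
  have hμ₁' : μ₁ = ν + (volume.restrict (Ico 0 (2 * π))).withDensity
      fun θ => ENNReal.ofReal (m (θ - c)) := hμ₁.trans <|
    withDensity_ofReal_eq_add (g := fun θ => m (θ - c)) _ hν
      (fun θ => hm_shift θ ▸ posPart_nonneg _) (hm_cont.comp (continuous_sub_right c)).measurable
      fun θ => by
        rw [hm_shift]
        linarith [posPart_sub_negPart (a * cos (k * θ))]
  calc W2sqCircle μ₀ μ₁
      ≤ W2sqCircle ν ν + W2sqCircle ρ _ := by rw [hμ₀', hμ₁']; exact W2sqCircle_add_le _ _ _ _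
    _ ≤ 0 + ENNReal.ofReal (c ^ 2) * ρ univ := add_le_add (W2sqCircle_self ν).le
        (W2sqCircle_withDensity_comp_sub_le hm_per (by positivity)
          (div_le_self pi_pos.le (by exact_mod_cast hk)))
    _ = ENNReal.ofReal (2 * π ^ 2 / (k : ℝ) ^ 2 * |a|) := by
        rw [zero_add, withDensity_apply _ MeasurableSet.univ, Measure.restrict_univ,
          setLIntegral_negPart_mul_cos_natCast_mul a (by omega), ← ENNReal.ofReal_mul (sq_nonneg c)]
        congr 1
        ring

/-- Single-frequency frequency-sensitivity bound on the circle: if `μ₁` has density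
`p₀ + a cos (k θ)` with `p₀ - (a cos)⁻(kθ) ≥ 0`, then `W₂²(μ₀, μ₁) ≤ (2π²/k²)·|a|`. -/
theorem W2sq_circle_single_frequency (p₀ : ℝ → ℝ) (a : ℝ) (k : ℕ) (hk : 1 ≤ k)
    (hp₀ : ∀ θ, 0 ≤ p₀ θ)
    (μ₀ μ₁ : Measure ℝ)
    (hμ₀ : μ₀ = (volume.restrict (Ico 0 (2 * π))).withDensity
      (fun θ => ENNReal.ofReal (p₀ θ)))
    (hμ₁ : μ₁ = (volume.restrict (Ico 0 (2 * π))).withDensity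
      (fun θ => ENNReal.ofReal (p₀ θ + a * Real.cos (k * θ))))
    [IsProbabilityMeasure μ₀] [IsProbabilityMeasure μ₁]
    (hν : ∀ θ, 0 ≤ p₀ θ - max (-(a * Real.cos (k * θ))) 0) :
    W2sqCircle μ₀ μ₁ ≤ ENNReal.ofReal (2 * π ^ 2 / (k : ℝ) ^ 2 * |a|) :=
  W2sq_circle_single_frequency_general p₀ a k hk μ₀ μ₁ hμ₀ hμ₁ hν
end

section
/- Let u : [0,T] → ℝ be continuous and let D_β(u)(t) = f_β(u(t)) / (∫₀^T f_β(u(s)) ds / T) be the normalized softplus encoding with f_β(x) = (1/β) log(1+e^{βx}), β > 0. If ∫₀^T max(u(s),0) ds > 0, then as β → +∞, D_β(u) converges uniformly on [0,T] to u⁺ / (∫₀^T u⁺ ds / T), the normalized positive part of u. -/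
/-!
`f_β = softplus β` is uniformly within `log 2 / β` of the positive part, because
`max y 0 ≤ log (1 + exp y) ≤ max y 0 + log 2`. Integrating, the normalizing average of
`f_β ∘ u` lies between `⟨u⁺⟩ > 0` and `⟨u⁺⟩ + log 2 / β`, and a quotient `a / A` depends
Lipschitz-continuously on `(a, A)` as long as `A` stays above a positive constant. Hence the
normalized encodings differ from `u⁺ / ⟨u⁺⟩` by `O(1 / β)`, uniformly in `t`.
-/

open Set intervalIntegral

noncomputable def softplus (β x : ℝ) : ℝ :=
  (1 / β) * Real.log (1 + Real.exp (β * x))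

section Softplus

variable {β : ℝ}

theorem continuous_softplus (β : ℝ) : Continuous (softplus β) :=
  continuous_const.mul <| (continuous_const.add <| Real.continuous_exp.comp <|
    continuous_const.mul continuous_id).log fun _ => (add_pos one_pos (Real.exp_pos _)).ne'

theorem max_zero_le_softplus (hβ : 0 < β) (x : ℝ) : max x 0 ≤ softplus β x := by
  rw [softplus, one_div, inv_mul_eq_div, le_div_iff₀ hβ, mul_comm, mul_max_of_nonneg _ _ hβ.le,
    mul_zero]
  refine max_le ?_ (Real.log_nonneg (by linarith [Real.exp_pos (β * x)]))
  calc β * x = Real.log (Real.exp (β * x)) := (Real.log_exp _).symm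
    _ ≤ Real.log (1 + Real.exp (β * x)) := Real.log_le_log (Real.exp_pos _) (by linarith)

theorem softplus_le_max_zero_add (hβ : 0 < β) (x : ℝ) :
    softplus β x ≤ max x 0 + Real.log 2 / β := by
  have hexp : 1 + Real.exp (β * x) ≤ 2 * Real.exp (β * max x 0) := by
    rw [mul_max_of_nonneg _ _ hβ.le, mul_zero]
    linarith [Real.exp_le_exp.2 (le_max_left (β * x) 0), Real.one_le_exp (le_max_right (β * x) 0)]
  have hlog : Real.log (1 + Real.exp (β * x)) ≤ Real.log 2 + β * max x 0 :=
    calc Real.log (1 + Real.exp (β * x)) ≤ Real.log (2 * Real.exp (β * max x 0)) :=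
          Real.log_le_log (by positivity) hexp
      _ = Real.log 2 + β * max x 0 := by
          rw [Real.log_mul two_ne_zero (Real.exp_ne_zero _), Real.log_exp]
  rw [softplus, one_div, inv_mul_eq_div, div_le_iff₀ hβ, add_mul, div_mul_cancel₀ _ hβ.ne']
  linarith

theorem abs_softplus_sub_max_zero_le (hβ : 0 < β) (x : ℝ) :
    |softplus β x - max x 0| ≤ Real.log 2 / β := by
  rw [abs_of_nonneg (sub_nonneg.2 (max_zero_le_softplus hβ x))]
  linarith [softplus_le_max_zero_add hβ x]

variable {u : ℝ → ℝ} {a b : ℝ}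

theorem intervalIntegrable_softplus_comp (hab : a ≤ b) (hu : ContinuousOn u (Icc a b)) :
    IntervalIntegrable (fun s => softplus β (u s)) MeasureTheory.volume a b :=
  ((continuous_softplus β).comp_continuousOn hu).intervalIntegrable_of_Icc hab

theorem intervalIntegrable_max_zero_comp (hab : a ≤ b) (hu : ContinuousOn u (Icc a b)) :
    IntervalIntegrable (fun s => max (u s) 0) MeasureTheory.volume a b :=
  ((continuous_id.max continuous_const).comp_continuousOn hu).intervalIntegrable_of_Icc hab

theorem integral_max_zero_le_integral_softplus (hβ : 0 < β) (hab : a ≤ b)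
    (hu : ContinuousOn u (Icc a b)) :
    ∫ s in a..b, max (u s) 0 ≤ ∫ s in a..b, softplus β (u s) :=
  integral_mono_on hab (intervalIntegrable_max_zero_comp hab hu)
    (intervalIntegrable_softplus_comp hab hu) fun s _ => max_zero_le_softplus hβ (u s)

theorem abs_integral_softplus_sub_integral_max_zero_le (hβ : 0 < β) (hab : a ≤ b)
    (hu : ContinuousOn u (Icc a b)) :
    |(∫ s in a..b, softplus β (u s)) - ∫ s in a..b, max (u s) 0| ≤ Real.log 2 / β * (b - a) := by
  rw [← integral_sub (intervalIntegrable_softplus_comp hab hu)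
    (intervalIntegrable_max_zero_comp hab hu), ← Real.norm_eq_abs,
    ← abs_of_nonneg (sub_nonneg.2 hab)]
  exact norm_integral_le_of_norm_le_const fun s _ => abs_softplus_sub_max_zero_le hβ (u s)

end Softplus

theorem abs_div_sub_div_le {a b A I δ η M : ℝ} (hI : 0 < I) (hIA : I ≤ A) (ha : |a - b| ≤ δ)
    (hA : |A - I| ≤ η) (hb : |b| ≤ M) :
    |a / A - b / I| ≤ (δ * I + M * η) / I ^ 2 := by
  have hA0 : 0 < A := hI.trans_le hIA
  have hnum : |(a - b) * I - b * (A - I)| ≤ δ * I + M * η :=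
    calc |(a - b) * I - b * (A - I)| ≤ |(a - b) * I| + |b * (A - I)| := abs_sub _ _
      _ = |a - b| * I + |b| * |A - I| := by rw [abs_mul, abs_mul, abs_of_pos hI]
      _ ≤ δ * I + M * η := add_le_add (mul_le_mul_of_nonneg_right ha hI.le)
          (mul_le_mul hb hA (abs_nonneg _) ((abs_nonneg _).trans hb))
  have hsplit : a / A - b / I = ((a - b) * I - b * (A - I)) / (A * I) := by
    field_simp
    ring
  rw [hsplit, abs_div, abs_of_pos (mul_pos hA0 hI)]
  calc |(a - b) * I - b * (A - I)| / (A * I) ≤ (δ * I + M * η) / (A * I) := by gcongr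
    _ ≤ (δ * I + M * η) / I ^ 2 := by
        gcongr
        · exact (abs_nonneg _).trans hnum
        · rw [sq]
          exact mul_le_mul_of_nonneg_right hIA hI.le

/-- If `u` is continuous on `[0,T]` and its positive part has positive integral, then the
normalized softplus encoding `D_β(u)(t) = f_β(u(t)) / (⟨f_β ∘ u⟩)` converges uniformly on
`[0,T]` to the normalized positive part `u⁺ / ⟨u⁺⟩` as `β → +∞`. -/
theorem softplus_encoding_tendstoUniformly (T : ℝ) (hT : 0 < T) (u : ℝ → ℝ)
    (hu : ContinuousOn u (Icc 0 T))
    (hpos : 0 < ∫ s in (0 : ℝ)..T, max (u s) 0) :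
    ∀ ε > (0 : ℝ), ∃ B > (0 : ℝ), ∀ β > B, ∀ t ∈ Icc (0 : ℝ) T,
      |((1 / β) * Real.log (1 + Real.exp (β * u t))) /
          ((∫ s in (0 : ℝ)..T, (1 / β) * Real.log (1 + Real.exp (β * u s))) / T) -
        (max (u t) 0) / ((∫ s in (0 : ℝ)..T, max (u s) 0) / T)| < ε := by
  intro ε hε
  obtain ⟨M, hM⟩ := isCompact_Icc.exists_bound_of_continuousOn hu
  have hM0 : 0 ≤ M := (norm_nonneg _).trans (hM 0 ⟨le_rfl, hT.le⟩)
  set I := ∫ s in (0 : ℝ)..T, max (u s) 0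
  set C := T * Real.log 2 * (I + M * T) / I ^ 2
  have hC : 0 < C := by have := Real.log_pos one_lt_two; positivity
  refine ⟨C / ε, by positivity, fun β hβ t ht => ?_⟩
  have hβ0 : 0 < β := (div_pos hC hε).trans hβ
  change |softplus β (u t) / ((∫ s in (0 : ℝ)..T, softplus β (u s)) / T) - _| < ε
  have hut : |max (u t) 0| ≤ M := by
    rw [abs_of_nonneg (le_max_right _ _)]
    exact (max_le (le_abs_self _) (abs_nonneg _)).trans (hM t ht)
  calc _ = T * |softplus β (u t) / (∫ s in (0 : ℝ)..T, softplus β (u s)) - max (u t) 0 / I| := by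
        rw [div_div_eq_mul_div, div_div_eq_mul_div, mul_div_right_comm, mul_div_right_comm _ T,
          ← sub_mul, abs_mul, abs_of_pos hT, mul_comm]
    _ ≤ T * ((Real.log 2 / β * I + M * (Real.log 2 / β * (T - 0))) / I ^ 2) := by
        gcongr
        exact abs_div_sub_div_le hpos (integral_max_zero_le_integral_softplus hβ0 hT.le hu)
          (abs_softplus_sub_max_zero_le hβ0 _)
          (abs_integral_softplus_sub_integral_max_zero_le hβ0 hT.le hu) hut
    _ = C / β := by ring
    _ < ε := by rwa [div_lt_comm₀ hβ0 hε]
end
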